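/- arXiv:math/0107130 — 4 statements merged into one kernel-verified Lean document; each statement's English description precedes it below -/
import Mathlib

section
/- Fix τ ∈ S_k, n ≥ k, and j with 0 ≤ j ≤ k such that either j = 0 or the pattern of τ_1…τ_j is an involution in S_j. Then the number of involutions π ∈ S_n which contain τ as a subsequence and which map exactly j elements of {1,…,k} into {1,…,k} equals C(n-k, k-j) · t_{n-2k+j}. -/
open Equiv Finset

/-- The number of involutions in the symmetric group S_n. -/
def numInvolutions (n : ℕ) : ℕ :=
  (Finset.univ.filter fun π : Equiv.Perm (Fin n) => π * π = 1).card

/-- `π ∈ S_n` contains `τ ∈ S_k` as a subsequence. -/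
def ContainsSubseq {n k : ℕ} (π : Equiv.Perm (Fin n)) (τ : Equiv.Perm (Fin k)) : Prop :=
  ∃ ι : Fin k → Fin n, StrictMono ι ∧ ∀ m : Fin k, (π (ι m) : ℕ) = (τ m : ℕ)

/-- `p` is the pattern (order-preserving relabeling) of the word `w`. -/
def IsPattern {j : ℕ} {α : Type*} [LinearOrder α] (w : Fin j → α) (p : Equiv.Perm (Fin j)) : Prop :=
  ∀ a b : Fin j, p a ≤ p b ↔ w a ≤ w b

/-- The pattern of `τ_1 … τ_j` is an involution in S_j. -/
def InitPatternIsInvolution {k : ℕ} (τ : Equiv.Perm (Fin k)) (j : ℕ) : Prop :=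
  ∃ hjk : j ≤ k, ∃ p : Equiv.Perm (Fin j),
    IsPattern (fun m : Fin j => τ (Fin.castLE hjk m)) p ∧ p * p = 1

/-- The j-set of `τ`. -/
def JSet {k : ℕ} (τ : Equiv.Perm (Fin k)) : Set ℕ :=
  {0} ∪ {j | 1 ≤ j ∧ InitPatternIsInvolution τ j}

open scoped Classical in
/-- The j-set of `τ`, as a finset. -/
noncomputable def JFinset {k : ℕ} (τ : Equiv.Perm (Fin k)) : Finset ℕ :=
  (Finset.range (k + 1)).filter fun j => j ∈ JSet τ

/-- Concatenation of decreasing blocks of consecutive integers starting above `s`. -/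
def layersFrom : ℕ → List ℕ → List ℕ
  | _, [] => []
  | s, a :: rest => ((List.range a).reverse.map fun t => s + t + 1) ++ layersFrom (s + a) rest

/-- `τ` is a layered permutation. -/
def IsLayered {k : ℕ} (τ : Equiv.Perm (Fin k)) : Prop :=
  ∃ comp : List ℕ, (∀ a ∈ comp, 0 < a) ∧ comp.sum = k ∧
    List.ofFn (fun m : Fin k => (τ m : ℕ) + 1) = layersFrom 0 comp
open scoped Classical

/-!
Let `π` be an involution containing `τ` at increasing positions `ι`. Then `ι m = π (τ m)`, so `π`
is determined on `[k]` by `ι`, and on `ι([k])` by `π (ι m) = τ m`. Let `B` be the set of positions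
`≥ k` carrying a value `< k`; it has `k - j` elements. Since `ι` is increasing, the `j` positions of
`ι` below `k` come first; they are the values `π` sends into `[k]`, namely `τ_1, …, τ_j`. Hence `ι`
enumerates `{τ_1, …, τ_j} ∪ B`, and on its first `j` entries it is `τ ∘ p⁻¹`, where `p` is the
pattern of `τ_1 … τ_j`. So `π` is forced on `[k] ∪ B`, and the forced values are consistent with an
involution exactly because `p = p⁻¹`. Off `[k] ∪ B`, `π` is an arbitrary involution of the
remaining `n + j - 2k` points, and there are `C(n - k, k - j)` choices of `B`.
-/

namespace Equiv.Perm

variable {α : Type*}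

theorem apply_apply_of_mul_self_eq_one {π : Perm α} (hπ : π * π = 1) (x : α) : π (π x) = x := by
  rw [← mul_apply, hπ, one_apply]

variable [DecidableEq α]

theorem apply_mem_iff_of_forall_notMem {f : Perm α} {C : Finset α} (hf : ∀ x ∉ C, f x = x)
    (x : α) : f x ∈ C ↔ x ∈ C := by
  by_cases hx : x ∈ C
  · refine iff_of_true (by_contra fun hfx => ?_) hx
    exact hfx (by rwa [f.injective (hf _ hfx)])
  · rw [hf x hx]

variable [Fintype α]

theorem card_involutions_eq_numInvolutions {m : ℕ} (e : α ≃ Fin m) :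
    #{σ : Perm α | σ * σ = 1} = numInvolutions m := by
  refine card_equiv e.permCongrHom.toEquiv fun σ => ?_
  simp only [mem_filter, mem_univ, true_and, MulEquiv.toEquiv_eq_coe, EquivLike.coe_coe,
    ← map_mul, MulEquiv.map_eq_one_iff]

theorem card_involutions_supported (C : Finset α) :
    #{f : Perm α | f * f = 1 ∧ ∀ x ∉ C, f x = x} = numInvolutions #C := by
  rw [← card_involutions_eq_numInvolutions C.equivFin]
  symm
  refine card_bij (fun σ _ => ofSubtype σ) (fun σ hσ => ?_)
    (fun _ _ _ _ h => ofSubtype_injective h) (fun f hf => ?_)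
  · simp only [mem_filter, mem_univ, true_and] at hσ ⊢
    exact ⟨by rw [← map_mul, hσ, map_one], fun x hx => ofSubtype_apply_of_not_mem σ hx⟩
  · simp only [mem_filter, mem_univ, true_and] at hf
    obtain ⟨hff, hfC⟩ := hf
    have hC := apply_mem_iff_of_forall_notMem hfC
    have hsupp : ∀ x, f x ≠ x → x ∈ C := fun x hx => not_not.1 fun hxC => hx (hfC x hxC)
    refine ⟨f.subtypePerm hC, ?_, ofSubtype_subtypePerm hC hsupp⟩
    simp only [mem_filter, mem_univ, true_and]
    exact ofSubtype_injective (by rw [map_mul, ofSubtype_subtypePerm hC hsupp, hff, map_one])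

/-- Multiplying by `μ` matches the involutions agreeing with `μ` on `S` with those fixing `S`
pointwise: `μ` and such an `f` have disjoint supports, so they commute. -/
theorem card_involutions_eqOn {μ : Perm α} (hμ : μ * μ = 1) {S : Finset α}
    (hμS : ∀ x ∉ S, μ x = x) :
    #{π : Perm α | π * π = 1 ∧ ∀ x ∈ S, π x = μ x} = numInvolutions #Sᶜ := by
  rw [← card_involutions_supported]
  have hsq : ∀ f : Perm α, (∀ x ∈ S, f x = x) → μ * f * (μ * f) = f * f := fun f hf => by
    have hdisj : Disjoint f μ := fun x => by
      by_cases hx : x ∈ S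
      · exact Or.inl (hf x hx)
      · exact Or.inr (hμS x hx)
    rw [hdisj.commute.mul_mul_mul_comm, hμ, one_mul]
  refine card_nbij' (μ * ·) (μ * ·) (fun π hπ => ?_) (fun f hf => ?_)
    (fun π _ => by simp [← mul_assoc, hμ]) (fun f _ => by simp [← mul_assoc, hμ])
  · simp only [mem_coe, mem_filter, mem_univ, true_and, mem_compl, not_not] at hπ ⊢
    have hfix : ∀ x ∈ S, (μ * π) x = x := fun x hx => by
      rw [mul_apply, hπ.2 x hx, apply_apply_of_mul_self_eq_one hμ]
    have hμμπ : μ * (μ * π) = π := by rw [← mul_assoc, hμ, one_mul]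
    refine ⟨?_, hfix⟩
    rw [← hsq _ hfix, hμμπ, hπ.1]
  · simp only [mem_coe, mem_filter, mem_univ, true_and, mem_compl, not_not] at hf ⊢
    exact ⟨by rw [hsq _ hf.2, hf.1], fun x hx => by rw [mul_apply, hf.2 x hx]⟩

end Equiv.Perm

theorem Fin.card_filter_le_val {n k : ℕ} : #{y : Fin n | k ≤ (y : ℕ)} = n - k := by
  have hsplit := card_filter_add_card_filter_not (s := univ) fun y : Fin n => (y : ℕ) < k
  simp only [Fin.card_filter_val_lt, not_lt, card_univ, Fintype.card_fin] at hsplit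
  omega

theorem IsPattern.strictMono_comp_symm {j : ℕ} {α : Type*} [LinearOrder α] {w : Fin j → α}
    {p : Perm (Fin j)} (hp : IsPattern w p) : StrictMono (w ∘ p.symm) := fun a b hab =>
  (lt_iff_lt_of_le_iff_le (hp (p.symm b) (p.symm a))).1 (by simpa using hab)

theorem initPatternIsInvolution_zero {k : ℕ} (τ : Perm (Fin k)) : InitPatternIsInvolution τ 0 :=
  ⟨k.zero_le, 1, fun a => a.elim0, one_mul 1⟩

section Occurrence

variable {k n : ℕ}

theorem exists_castLE_apply_eq (τ : Perm (Fin k)) (hn : k ≤ n) {y : Fin n} (hy : (y : ℕ) < k) :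
    ∃ m, Fin.castLE hn (τ m) = y :=
  ⟨τ.symm ⟨y, hy⟩, by ext; simp⟩

def prefixValues (τ : Perm (Fin k)) (hn : k ≤ n) (j : ℕ) : Finset (Fin n) :=
  (univ.filter fun m : Fin k => (m : ℕ) < j).image fun m => Fin.castLE hn (τ m)

variable {τ : Perm (Fin k)} {hn : k ≤ n} {j : ℕ}

theorem lt_of_mem_prefixValues {y : Fin n} (hy : y ∈ prefixValues τ hn j) : (y : ℕ) < k := by
  obtain ⟨m, -, rfl⟩ := mem_image.1 hy
  exact (τ m).2

theorem castLE_mem_prefixValues {m : Fin k} (hm : (m : ℕ) < j) :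
    Fin.castLE hn (τ m) ∈ prefixValues τ hn j :=
  mem_image_of_mem _ (by simpa using hm)

theorem card_prefixValues (hjk : j ≤ k) : #(prefixValues τ hn j) = j := by
  rw [prefixValues, card_image_of_injective _ fun a b hab =>
    τ.injective (Fin.castLE_injective hn hab), Fin.card_filter_val_lt, min_eq_right hjk]

theorem card_prefixValues_union (hjk : j ≤ k) {B : Finset (Fin n)} (hB : ∀ y ∈ B, k ≤ (y : ℕ))
    (hcard : #B = k - j) : #(prefixValues τ hn j ∪ B) = k := by
  rw [card_union_of_disjoint (disjoint_left.2 fun y hy hyB =>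
    (hB y hyB).not_gt (lt_of_mem_prefixValues hy)), card_prefixValues hjk, hcard]
  omega

variable {B : Finset (Fin n)} (h : #(prefixValues τ hn j ∪ B) = k)

/-- The positions of the occurrence of `τ` in an involution `π` with `π⁻¹[k] ∖ [k] = B`: they
are forced to be `τ_1, …, τ_j` (the positions below `k`) together with `B`, in increasing order. -/
def occurrence : Fin k ↪o Fin n :=
  (prefixValues τ hn j ∪ B).orderEmbOfFin h

/-- The involution on `[k] ∪ B` swapping the value `τ m` with the position `occurrence h m`,
extended by the identity. -/
def pairing (y : Fin n) : Fin n :=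
  if hy : (y : ℕ) < k then occurrence h (τ.symm ⟨y, hy⟩)
  else if hyB : y ∈ B then
    Fin.castLE hn (τ ((orderIsoOfFin _ h).symm ⟨y, mem_union_right _ hyB⟩))
  else y

theorem occurrence_mem (m : Fin k) : occurrence h m ∈ prefixValues τ hn j ∪ B :=
  orderEmbOfFin_mem _ h m

theorem exists_occurrence_eq {y : Fin n} (hy : y ∈ prefixValues τ hn j ∪ B) :
    ∃ m, occurrence h m = y := by
  rw [← Set.mem_range, occurrence, range_orderEmbOfFin]
  exact hy

theorem occurrence_mem_right_of_le {m : Fin k} (hm : k ≤ (occurrence h m : ℕ)) :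
    occurrence h m ∈ B :=
  (mem_union.1 (occurrence_mem h m)).resolve_left fun hT => hm.not_gt (lt_of_mem_prefixValues hT)

theorem occurrence_lt_iff (hjk : j ≤ k) (hB : ∀ y ∈ B, k ≤ (y : ℕ)) (m : Fin k) :
    (occurrence h m : ℕ) < k ↔ (m : ℕ) < j := by
  have hcard : #{m : Fin k | (occurrence h m : ℕ) < k} = j := by
    refine (card_nbij (occurrence h) (fun m hm => ?_) (occurrence h).injective.injOn
      (fun y hy => ?_)).trans (card_prefixValues (τ := τ) (hn := hn) hjk)
    · exact (mem_union.1 (occurrence_mem h m)).resolve_right fun hB' =>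
        (hB _ hB').not_gt (mem_filter.1 hm).2
    · obtain ⟨m, rfl⟩ := exists_occurrence_eq h (mem_union_left B hy)
      exact ⟨m, by simpa using lt_of_mem_prefixValues hy, rfl⟩
  have hdown := Fin.lt_card_filter_univ_iff_apply_of_imp (j := m)
    (fun m : Fin k => (occurrence h m : ℕ) < k)
    fun a b hba ha => lt_of_le_of_lt ((occurrence h).monotone hba) ha
  rw [hcard] at hdown
  exact hdown.symm

theorem pairing_castLE (m : Fin k) : pairing h (Fin.castLE hn (τ m)) = occurrence h m := by
  rw [pairing, dif_pos (show ((Fin.castLE hn (τ m) : Fin n) : ℕ) < k from (τ m).2)]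
  congr
  rw [τ.symm_apply_eq]
  rfl

theorem pairing_of_not_lt_of_notMem {y : Fin n} (hy : ¬ (y : ℕ) < k) (hyB : y ∉ B) :
    pairing h y = y := by
  rw [pairing, dif_neg hy, dif_neg hyB]

theorem occurrence_castLE (hjk : j ≤ k) (hB : ∀ y ∈ B, k ≤ (y : ℕ)) {p : Perm (Fin j)}
    (hp : IsPattern (fun a : Fin j => τ (Fin.castLE hjk a)) p) (a : Fin j) :
    occurrence h (Fin.castLE hjk a) = Fin.castLE hn (τ (Fin.castLE hjk (p.symm a))) := by
  have hT := card_prefixValues (τ := τ) (hn := hn) hjk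
  have hocc : (fun a : Fin j => occurrence h (Fin.castLE hjk a))
      = (prefixValues τ hn j).orderEmbOfFin hT := by
    refine orderEmbOfFin_unique hT (fun a => ?_) ((occurrence h).strictMono.comp
      (Fin.strictMono_castLE hjk))
    refine (mem_union.1 (occurrence_mem h _)).resolve_right fun hB' => (hB _ hB').not_gt ?_
    exact (occurrence_lt_iff h hjk hB _).2 a.2
  have hpat : (fun a : Fin j => Fin.castLE hn (τ (Fin.castLE hjk (p.symm a))))
      = (prefixValues τ hn j).orderEmbOfFin hT :=
    orderEmbOfFin_unique hT (fun a => castLE_mem_prefixValues (p.symm a).2)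
      ((Fin.strictMono_castLE hn).comp hp.strictMono_comp_symm)
  exact congrFun (hocc.trans hpat.symm) a

theorem pairing_occurrence (hτ : InitPatternIsInvolution τ j) (hB : ∀ y ∈ B, k ≤ (y : ℕ))
    (m : Fin k) : pairing h (occurrence h m) = Fin.castLE hn (τ m) := by
  obtain ⟨hjk, p, hp, hpp⟩ := hτ
  by_cases hm : (m : ℕ) < j
  · have hp_symm : p.symm = p := (Perm.inv_def p).symm.trans (inv_eq_of_mul_eq_one_right hpp)
    obtain ⟨a, rfl⟩ : ∃ a : Fin j, Fin.castLE hjk a = m := ⟨⟨m, hm⟩, rfl⟩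
    rw [occurrence_castLE h hjk hB hp, pairing_castLE, occurrence_castLE h hjk hB hp, hp_symm,
      ← Perm.mul_apply, hpp, Perm.one_apply]
  · have hk : ¬ (occurrence h m : ℕ) < k := by rwa [occurrence_lt_iff h hjk hB]
    rw [pairing, dif_neg hk, dif_pos (occurrence_mem_right_of_le h (not_lt.1 hk))]
    congr
    rw [OrderIso.symm_apply_eq]
    rfl

theorem pairing_involutive (hτ : InitPatternIsInvolution τ j) (hB : ∀ y ∈ B, k ≤ (y : ℕ)) :
    Function.Involutive (pairing h) := by
  intro y
  by_cases hy : (y : ℕ) < k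
  · obtain ⟨m, rfl⟩ := exists_castLE_apply_eq τ hn hy
    rw [pairing_castLE, pairing_occurrence h hτ hB]
  by_cases hyB : y ∈ B
  · obtain ⟨m, rfl⟩ := exists_occurrence_eq h (mem_union_right _ hyB)
    rw [pairing_occurrence h hτ hB, pairing_castLE]
  · rw [pairing_of_not_lt_of_notMem h hy hyB, pairing_of_not_lt_of_notMem h hy hyB]

end Occurrence

section Characterization

variable {k n j : ℕ}

def crossingSet (k : ℕ) (π : Perm (Fin n)) : Finset (Fin n) :=
  univ.filter fun y : Fin n => k ≤ (y : ℕ) ∧ (π y : ℕ) < k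

theorem card_filter_apply_castLE_lt (τ : Perm (Fin k)) (hn : k ≤ n) (π : Perm (Fin n)) :
    #{m : Fin k | (π (Fin.castLE hn (τ m)) : ℕ) < k}
      = #{x : Fin n | (x : ℕ) < k ∧ (π x : ℕ) < k} := by
  refine card_nbij (fun m => Fin.castLE hn (τ m)) (fun m hm => ?_)
    (fun a _ b _ hab => τ.injective (Fin.castLE_injective hn hab)) (fun x hx => ?_)
  · simpa using (mem_filter.1 hm).2
  · obtain ⟨m, rfl⟩ := exists_castLE_apply_eq τ hn (mem_filter.1 hx).2.1
    exact ⟨m, by simpa using (mem_filter.1 hx).2.2, rfl⟩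

theorem card_crossingSet (hn : k ≤ n) (π : Perm (Fin n)) :
    #(crossingSet k π) = k - #{x : Fin n | (x : ℕ) < k ∧ (π x : ℕ) < k} := by
  have hpre : #{y : Fin n | (π y : ℕ) < k} = k := by
    rw [card_equiv π (t := univ.filter fun x : Fin n => (x : ℕ) < k) fun y => by simp,
      Fin.card_filter_val_lt, min_eq_right hn]
  have hsplit : #{x : Fin n | (x : ℕ) < k ∧ (π x : ℕ) < k} + #(crossingSet k π)
      = #{y : Fin n | (π y : ℕ) < k} := by
    rw [crossingSet, ← card_union_of_disjoint (disjoint_filter.2 fun y _ h1 h2 =>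
      (not_le.2 h1.1) h2.1)]
    congr 1
    ext y
    simp only [mem_union, mem_filter, mem_univ, true_and]
    omega
  omega

variable {τ : Perm (Fin k)} {hn : k ≤ n} {B : Finset (Fin n)}
  (h : #(prefixValues τ hn j ∪ B) = k) {π : Perm (Fin n)} (hπ : π * π = 1)
include hπ

/-- The occurrence of `τ` in an involution is `π ∘ τ`, an increasing map into
`{τ_1, …, τ_j} ∪ B`. -/
theorem apply_castLE_eq_occurrence (hcont : ContainsSubseq π τ)
    (hA : #{x : Fin n | (x : ℕ) < k ∧ (π x : ℕ) < k} = j) (hcross : crossingSet k π = B)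
    (m : Fin k) : π (Fin.castLE hn (τ m)) = occurrence h m := by
  obtain ⟨ι, hι, hιτ⟩ := hcont
  have hιπ : ι = fun m => π (Fin.castLE hn (τ m)) := funext fun m => by
    have hv : π (ι m) = Fin.castLE hn (τ m) := Fin.ext (hιτ m)
    rw [← hv, Perm.apply_apply_of_mul_self_eq_one hπ]
  subst hιπ
  have hlt : ∀ m : Fin k, (π (Fin.castLE hn (τ m)) : ℕ) < k ↔ (m : ℕ) < j := fun m => by
    have hdown := Fin.lt_card_filter_univ_iff_apply_of_imp (j := m)
      (fun m : Fin k => (π (Fin.castLE hn (τ m)) : ℕ) < k)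
      fun a b hba ha => lt_of_le_of_lt (hι.monotone hba) ha
    rw [card_filter_apply_castLE_lt, hA] at hdown
    exact hdown.symm
  have hmem : ∀ m, π (Fin.castLE hn (τ m)) ∈ prefixValues τ hn j ∪ B := fun m => by
    by_cases hm : (π (Fin.castLE hn (τ m)) : ℕ) < k
    · obtain ⟨m', hm'⟩ := exists_castLE_apply_eq τ hn hm
      refine mem_union_left _ (hm' ▸ castLE_mem_prefixValues ((hlt m').1 ?_))
      rw [hm', Perm.apply_apply_of_mul_self_eq_one hπ]
      exact (τ m).2
    · refine mem_union_right _ (hcross ▸ mem_filter.2 ⟨mem_univ _, not_lt.1 hm, ?_⟩)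
      rw [Perm.apply_apply_of_mul_self_eq_one hπ]
      exact (τ m).2
  exact congrFun (orderEmbOfFin_unique h hmem hι) m

variable (hocc : ∀ m, π (Fin.castLE hn (τ m)) = occurrence h m)
include hocc

theorem containsSubseq_of_forall_apply_castLE_eq : ContainsSubseq π τ :=
  ⟨occurrence h, (occurrence h).strictMono, fun m => by
    rw [← hocc, Perm.apply_apply_of_mul_self_eq_one hπ, Fin.val_castLE]⟩

omit hπ in
theorem card_filter_lt_of_forall_apply_castLE_eq (hjk : j ≤ k) (hB : ∀ y ∈ B, k ≤ (y : ℕ)) :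
    #{x : Fin n | (x : ℕ) < k ∧ (π x : ℕ) < k} = j := by
  rw [← card_filter_apply_castLE_lt τ hn π]
  simp_rw [hocc, occurrence_lt_iff h hjk hB]
  rw [Fin.card_filter_val_lt, min_eq_right hjk]

theorem crossingSet_eq_of_forall_apply_castLE_eq (hB : ∀ y ∈ B, k ≤ (y : ℕ)) :
    crossingSet k π = B := by
  ext y
  simp only [crossingSet, mem_filter, mem_univ, true_and]
  constructor
  · rintro ⟨hky, hπy⟩
    obtain ⟨m, hm⟩ := exists_castLE_apply_eq τ hn hπy
    obtain rfl : y = occurrence h m := by rw [← hocc, hm, Perm.apply_apply_of_mul_self_eq_one hπ]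
    exact occurrence_mem_right_of_le h hky
  · intro hyB
    obtain ⟨m, rfl⟩ := exists_occurrence_eq h (mem_union_right _ hyB)
    refine ⟨hB _ hyB, ?_⟩
    rw [← hocc, Perm.apply_apply_of_mul_self_eq_one hπ]
    exact (τ m).2

omit hocc

theorem containsSubseq_and_crossingSet_eq_iff (hτ : InitPatternIsInvolution τ j)
    (hB : ∀ y ∈ B, k ≤ (y : ℕ)) :
    (ContainsSubseq π τ ∧ #{x : Fin n | (x : ℕ) < k ∧ (π x : ℕ) < k} = j ∧ crossingSet k π = B)
      ↔ ∀ m, π (Fin.castLE hn (τ m)) = occurrence h m :=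
  ⟨fun ⟨hcont, hA, hcross⟩ => apply_castLE_eq_occurrence h hπ hcont hA hcross,
    fun hocc => ⟨containsSubseq_of_forall_apply_castLE_eq h hπ hocc,
      card_filter_lt_of_forall_apply_castLE_eq h hocc hτ.1 hB,
      crossingSet_eq_of_forall_apply_castLE_eq h hπ hocc hB⟩⟩

theorem forall_apply_castLE_eq_iff_eqOn_pairing (hτ : InitPatternIsInvolution τ j)
    (hB : ∀ y ∈ B, k ≤ (y : ℕ)) :
    (∀ m, π (Fin.castLE hn (τ m)) = occurrence h m)
      ↔ ∀ x ∈ univ.filter (fun x : Fin n => (x : ℕ) < k) ∪ B, π x = pairing h x := by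
  refine ⟨fun hocc x hx => ?_, fun hpair m => by
    rw [hpair _ (mem_union_left _ (by simp)), pairing_castLE]⟩
  rcases mem_union.1 hx with hx | hx
  · obtain ⟨m, rfl⟩ := exists_castLE_apply_eq τ hn (mem_filter.1 hx).2
    rw [hocc, pairing_castLE]
  · obtain ⟨m, rfl⟩ := exists_occurrence_eq h (mem_union_right _ hx)
    rw [pairing_occurrence h hτ hB, ← hocc, Perm.apply_apply_of_mul_self_eq_one hπ]

end Characterization

theorem card_involutions_containsSubseq_crossingSet_eq {k n j : ℕ} {τ : Perm (Fin k)}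
    (hn : k ≤ n) (hτ : InitPatternIsInvolution τ j) {B : Finset (Fin n)}
    (hB : ∀ y ∈ B, k ≤ (y : ℕ)) (hcard : #B = k - j) :
    #{π : Perm (Fin n) | π * π = 1 ∧ ContainsSubseq π τ ∧
        #{x : Fin n | (x : ℕ) < k ∧ (π x : ℕ) < k} = j ∧ crossingSet k π = B}
      = numInvolutions (n + j - 2 * k) := by
  have h := card_prefixValues_union (τ := τ) (hn := hn) hτ.1 hB hcard
  have hS : #(univ.filter (fun x : Fin n => (x : ℕ) < k) ∪ B) = k + (k - j) := by
    rw [card_union_of_disjoint (disjoint_left.2 fun y hy hyB =>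
      (hB y hyB).not_gt (mem_filter.1 hy).2), Fin.card_filter_val_lt, min_eq_right hn, hcard]
  set μ := Function.Involutive.toPerm _ (pairing_involutive h hτ hB)
  calc #{π : Perm (Fin n) | π * π = 1 ∧ ContainsSubseq π τ ∧
          #{x : Fin n | (x : ℕ) < k ∧ (π x : ℕ) < k} = j ∧ crossingSet k π = B}
      = #{π : Perm (Fin n) | π * π = 1 ∧
          ∀ x ∈ univ.filter (fun x : Fin n => (x : ℕ) < k) ∪ B, π x = μ x} := by
        refine congrArg card (filter_congr fun π _ => and_congr_right fun hπ => ?_)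
        exact (containsSubseq_and_crossingSet_eq_iff h hπ hτ hB).trans
          (forall_apply_castLE_eq_iff_eqOn_pairing h hπ hτ hB)
    _ = numInvolutions (n + j - 2 * k) := by
        have hμ : μ * μ = 1 := Equiv.ext fun x => pairing_involutive h hτ hB x
        have hcount := Perm.card_involutions_eqOn hμ
            (S := univ.filter (fun x : Fin n => (x : ℕ) < k) ∪ B) fun x hx => by
          simp only [mem_union, mem_filter, mem_univ, true_and, not_or] at hx
          exact pairing_of_not_lt_of_notMem h hx.1 hx.2
        rw [card_compl, Fintype.card_fin, hS] at hcount
        rw [show n + j - 2 * k = n - (k + (k - j)) by have := hτ.1; omega, ← hcount]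
        -- the two filters differ only in the instance deciding `∀ x ∈ S, π x = μ x`
        congr 1
        ext π
        simp only [mem_filter]

theorem count_involutions_containing_with_j_general {k n j : ℕ} (τ : Equiv.Perm (Fin k))
    (hn : k ≤ n)
    (hj : j = 0 ∨ InitPatternIsInvolution τ j) :
    (Finset.univ.filter fun π : Equiv.Perm (Fin n) =>
        π * π = 1 ∧ ContainsSubseq π τ ∧
        (Finset.univ.filter fun x : Fin n => (x : ℕ) < k ∧ (π x : ℕ) < k).card = j).card
      = Nat.choose (n - k) (k - j) * numInvolutions (n + j - 2 * k) := by
  have hτ : InitPatternIsInvolution τ j :=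
    hj.elim (fun hj0 => hj0 ▸ initPatternIsInvolution_zero τ) id
  have hmaps : ∀ π ∈ (univ.filter fun π : Perm (Fin n) => π * π = 1 ∧ ContainsSubseq π τ ∧
        #{x : Fin n | (x : ℕ) < k ∧ (π x : ℕ) < k} = j),
      crossingSet k π ∈ powersetCard (k - j) {y : Fin n | k ≤ (y : ℕ)} := fun π hπ =>
    mem_powersetCard.2 ⟨fun y hy => mem_filter.2 ⟨mem_univ y, (mem_filter.1 hy).2.1⟩,
      by rw [card_crossingSet hn, (mem_filter.1 hπ).2.2.2]⟩
  rw [card_eq_sum_card_fiberwise hmaps, sum_congr rfl fun B hB => ?_, sum_const,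
    card_powersetCard, Fin.card_filter_le_val, smul_eq_mul]
  obtain ⟨hBsub, hcard⟩ := mem_powersetCard.1 hB
  rw [filter_filter]
  simp only [and_assoc]
  exact card_involutions_containsSubseq_crossingSet_eq hn hτ
    (fun y hy => (mem_filter.1 (hBsub hy)).2) hcard

theorem count_involutions_containing_with_j {k n j : ℕ} (τ : Equiv.Perm (Fin k))
    (hn : k ≤ n) (hjk : j ≤ k)
    (hj : j = 0 ∨ InitPatternIsInvolution τ j) :
    (Finset.univ.filter fun π : Equiv.Perm (Fin n) =>
        π * π = 1 ∧ ContainsSubseq π τ ∧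
        (Finset.univ.filter fun x : Fin n => (x : ℕ) < k ∧ (π x : ℕ) < k).card = j).card
      = Nat.choose (n - k) (k - j) * numInvolutions (n + j - 2 * k) :=
  count_involutions_containing_with_j_general τ hn hj
end

section
/- Let τ ∈ S_k with τ_i = k, and define op_i(τ) ∈ S_{k+1} by increasing every value of τ that is at least i by 1 and then appending the value i. Then the pattern of the first k values of op_i(τ) equals τ, and op_i(τ) is an involution if and only if the permutation in S_{k-1} obtained by deleting the value k from τ (and taking the pattern) is an involution. -/
open Equiv Finset

open scoped Classical

/-!
The first `k + 1` values of `op_i(τ)` are `τ` followed by the order embedding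
`(castSucc i).succAbove`, so their pattern is `τ`. The permutation `op_i(τ)` exchanges
`castSucc i` and `last (k + 1)`, and on the remaining points `castSucc (i.succAbove a)` it acts
as the erasure of the maximum of `τ` acts on `a`; hence it is an involution iff that erasure is,
and patterns are unique.
-/

section IsPattern

variable {j : ℕ} {α β : Type*} [LinearOrder α] [LinearOrder β]

theorem isPattern_self (p : Perm (Fin j)) : IsPattern (⇑p) p :=
  fun _ _ => Iff.rfl

theorem isPattern_comp_strictMono_iff {f : α → β} (hf : StrictMono f) {w : Fin j → α}
    {p : Perm (Fin j)} : IsPattern (f ∘ w) p ↔ IsPattern w p := by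
  simp only [IsPattern, Function.comp_apply, hf.le_iff_le]

/-- Since `Fin j` has a unique order automorphism, a word has at most one pattern. -/
theorem IsPattern.unique {w : Fin j → α} {p r : Perm (Fin j)} (hp : IsPattern w p)
    (hr : IsPattern w r) : p = r := by
  let e : Fin j ≃o Fin j :=
    { toEquiv := p.symm.trans r
      map_rel_iff' := fun {a b} => by
        simpa using (hr (p.symm a) (p.symm b)).trans (hp _ _).symm }
  have he : e = OrderIso.refl _ := Subsingleton.elim _ _
  ext x
  simpa [e] using (congrArg Fin.val (DFunLike.congr_fun he (p x))).symm

end IsPattern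

theorem Equiv.Perm.mul_self_eq_one_iff_of_semiconj {α β : Type*} {σ : Perm α} {q : Perm β}
    {e : β → α} (he : Function.Injective e) (hsemiconj : ∀ b, σ (e b) = e (q b))
    (hout : ∀ x, x ∉ Set.range e → σ (σ x) = x) : σ * σ = 1 ↔ q * q = 1 := by
  simp only [Perm.ext_iff, Perm.mul_apply, Perm.one_apply]
  constructor
  · intro h b
    apply he
    rw [← hsemiconj, ← hsemiconj, h]
  · intro h x
    by_cases hx : x ∈ Set.range e
    · obtain ⟨b, rfl⟩ := hx
      rw [hsemiconj, hsemiconj, h]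
    · exact hout x hx

theorem Fin.mem_range_castSucc_comp_succAbove {n : ℕ} (p : Fin (n + 1)) (x : Fin (n + 2)) :
    x ∈ Set.range (Fin.castSucc ∘ p.succAbove) ∨ x = Fin.castSucc p ∨
      x = Fin.last (n + 1) := by
  induction x using Fin.lastCases with
  | last => exact .inr (.inr rfl)
  | cast m =>
    by_cases hm : m = p
    · exact .inr (.inl (congrArg _ hm))
    · obtain ⟨a, rfl⟩ := Fin.exists_succAbove_eq hm
      exact .inl ⟨a, rfl⟩

section EraseMax

variable {k : ℕ} (τ : Perm (Fin (k + 1))) {pos : Fin (k + 1)} (hpos : τ pos = Fin.last k)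

include hpos in
theorem apply_succAbove_ne_last (a : Fin k) : τ (pos.succAbove a) ≠ Fin.last k := by
  rw [← hpos]
  exact τ.injective.ne (Fin.succAbove_ne pos a)

/-- Deleting the value `k` (at position `pos`) from `τ ∈ S_{k+1}` and taking the pattern. -/
noncomputable def eraseMax : Perm (Fin k) :=
  Equiv.ofBijective (fun a => (τ (pos.succAbove a)).castPred (apply_succAbove_ne_last τ hpos a))
    (Finite.injective_iff_bijective.mp fun a b hab => by
      simpa using Fin.castPred_inj.mp hab)

theorem castSucc_eraseMax (a : Fin k) :
    Fin.castSucc (eraseMax τ hpos a) = τ (pos.succAbove a) :=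
  Fin.castSucc_castPred _ (apply_succAbove_ne_last τ hpos a)

theorem isPattern_eraseMax :
    IsPattern (fun m : Fin k => τ (pos.succAbove m)) (eraseMax τ hpos) := by
  rw [← funext (castSucc_eraseMax τ hpos)]
  exact (isPattern_comp_strictMono_iff Fin.strictMono_castSucc).mpr (isPattern_self _)

end EraseMax

theorem op_i_properties {k : ℕ} (τ : Equiv.Perm (Fin (k + 1))) (pos : Fin (k + 1))
    (hpos : τ pos = Fin.last k)
    (σ : Equiv.Perm (Fin (k + 2)))
    (hσ : ∀ m : Fin (k + 1), (σ (Fin.castSucc m) : ℕ) =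
      if (pos : ℕ) ≤ (τ m : ℕ) then (τ m : ℕ) + 1 else (τ m : ℕ))
    (hlast : (σ (Fin.last (k + 1)) : ℕ) = (pos : ℕ)) :
    IsPattern (fun m : Fin (k + 1) => σ (Fin.castSucc m)) τ ∧
    (σ * σ = 1 ↔
      ∃ p : Equiv.Perm (Fin k),
        IsPattern (fun m : Fin k => τ (pos.succAbove m)) p ∧ p * p = 1) := by
  have hinit : ∀ m, σ (Fin.castSucc m) = (Fin.castSucc pos).succAbove (τ m) := fun m => by
    rw [Fin.ext_iff, hσ, Fin.succAbove]
    simp only [Fin.lt_def]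
    split_ifs <;> simp_all; omega
  have hlast' : σ (Fin.last (k + 1)) = Fin.castSucc pos := Fin.ext hlast
  have hmax : σ (Fin.castSucc pos) = Fin.last (k + 1) := by
    rw [hinit, hpos,
      Fin.succAbove_of_le_castSucc _ _ (Fin.castSucc_le_castSucc_iff.mpr pos.le_last),
      Fin.succ_last]
  have hsemiconj : ∀ a, σ (Fin.castSucc (pos.succAbove a)) =
      Fin.castSucc (pos.succAbove (eraseMax τ hpos a)) := fun a => by
    rw [hinit, ← castSucc_eraseMax τ hpos, Fin.castSucc_succAbove_castSucc]
  have hout : ∀ x, x ∉ Set.range (Fin.castSucc ∘ pos.succAbove) → σ (σ x) = x := by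
    intro x hx
    rcases Fin.mem_range_castSucc_comp_succAbove pos x with hx' | rfl | rfl
    · exact absurd hx' hx
    · rw [hmax, hlast']
    · rw [hlast', hmax]
  refine ⟨?_, ?_⟩
  · rw [funext hinit]
    exact (isPattern_comp_strictMono_iff (Fin.strictMono_succAbove _)).mpr (isPattern_self τ)
  · rw [Perm.mul_self_eq_one_iff_of_semiconj
      (Fin.castSucc_injective _ |>.comp (Fin.succAbove_right_injective)) hsemiconj hout]
    constructor
    · exact fun h => ⟨_, isPattern_eraseMax τ hpos, h⟩
    · rintro ⟨p, hp, hpp⟩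
      rwa [← hp.unique (isPattern_eraseMax τ hpos)]
end

section
/- If σ ∈ S_{k+1} is an involution whose length-k initial pattern equals τ ∈ S_k, then σ = op_n(τ) (if σ fixes k+1) or σ = op_i(τ) (if σ does not fix k+1), where op_n and op_i are the two extension operations. -/
open Equiv Finset

open scoped Classical

lemma strictMono_fin_id {k : ℕ} {e : Fin k → Fin k} (he : StrictMono e) : ∀ x, e x = x := by
  have hs : Function.Surjective e := Finite.injective_iff_surjective.mp he.injective
  intro x
  exact Fin.ext (Fin.coe_orderIso_apply (StrictMono.orderIsoOfSurjective e he hs) x)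

lemma pattern_eq {k : ℕ} (τ : Equiv.Perm (Fin k)) (f : Fin k → Fin k)
    (h : ∀ a b, τ a ≤ τ b ↔ f a ≤ f b) : ∀ m, f m = τ m := by
  have he : StrictMono (fun x => f (τ.symm x)) := by
    intro x y hxy
    have h1 : f (τ.symm x) ≤ f (τ.symm y) := by
      rw [← h]; simp [hxy.le]
    have h2 : f (τ.symm x) ≠ f (τ.symm y) := by
      intro hne
      have : τ (τ.symm x) ≤ τ (τ.symm y) ∧ τ (τ.symm y) ≤ τ (τ.symm x) :=
        ⟨(h _ _).2 hne.le, (h _ _).2 hne.ge⟩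
      simp at this
      exact hxy.ne (le_antisymm this.1 this.2)
    exact lt_of_le_of_ne h1 h2
  intro m
  have := strictMono_fin_id he (τ m)
  simpa using this

theorem involution_extension_dichotomy {k : ℕ} (τ : Equiv.Perm (Fin k))
    (σ : Equiv.Perm (Fin (k + 1))) (hσ : σ * σ = 1)
    (hpat : IsPattern (fun m : Fin k => σ (Fin.castSucc m)) τ) :
    (σ (Fin.last k) = Fin.last k →
      ∀ m : Fin k, (σ (Fin.castSucc m) : ℕ) = (τ m : ℕ)) ∧
    (σ (Fin.last k) ≠ Fin.last k →
      ∃ pos : Fin k, (τ pos : ℕ) = k - 1 ∧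
        (∀ m : Fin k, (σ (Fin.castSucc m) : ℕ) =
          if (pos : ℕ) ≤ (τ m : ℕ) then (τ m : ℕ) + 1 else (τ m : ℕ)) ∧
        (σ (Fin.last k) : ℕ) = (pos : ℕ)) := by
  constructor
  · intro hfix m
    have hne : ∀ m : Fin k, σ (Fin.castSucc m) ≠ Fin.last k := by
      intro m hm
      have := σ.injective (hm.trans hfix.symm)
      exact (Fin.castSucc_lt_last m).ne this
    have hlt : ∀ m : Fin k, (σ (Fin.castSucc m) : ℕ) < k := by
      intro m
      have := Fin.lt_last_iff_ne_last.mpr (hne m)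
      simpa [Fin.lt_iff_val_lt_val] using this
    have key := pattern_eq τ (fun m => ⟨(σ (Fin.castSucc m) : ℕ), hlt m⟩)
      (fun a b => by rw [hpat a b, Fin.mk_le_mk]; exact Fin.le_def)
    exact congrArg Fin.val (key m)
  · intro hnfix
    obtain ⟨pos, hpos⟩ : ∃ pos : Fin k, σ (Fin.last k) = Fin.castSucc pos := by
      have := Fin.lt_last_iff_ne_last.mpr hnfix
      exact ⟨⟨(σ (Fin.last k) : ℕ), by simpa [Fin.lt_iff_val_lt_val] using this⟩, by
        simp [Fin.ext_iff]⟩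
    have hback : σ (Fin.castSucc pos) = Fin.last k := by
      have : σ (σ (Fin.last k)) = Fin.last k := by
        have := congrArg (fun π : Equiv.Perm (Fin (k+1)) => π (Fin.last k)) hσ
        simpa using this
      rwa [hpos] at this
    have hposlt : (pos : ℕ) < k := pos.isLt
    -- values of σ ∘ castSucc avoid castSucc pos
    have havoid : ∀ m : Fin k, (σ (Fin.castSucc m) : ℕ) ≠ (pos : ℕ) := by
      intro m hm
      have : σ (Fin.castSucc m) = Fin.castSucc pos := by
        rw [Fin.ext_iff]; simpa using hm
      have := σ.injective (this.trans hpos.symm)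
      exact (Fin.castSucc_lt_last m).ne this
    have hle : ∀ m : Fin k, (σ (Fin.castSucc m) : ℕ) ≤ k := fun m =>
      Nat.lt_succ_iff.mp (σ (Fin.castSucc m)).isLt
    set f : Fin k → Fin k := fun m =>
      if hc : (σ (Fin.castSucc m) : ℕ) < (pos : ℕ) then ⟨(σ (Fin.castSucc m) : ℕ), hc.trans hposlt⟩
      else ⟨(σ (Fin.castSucc m) : ℕ) - 1, by
        have := havoid m; have := hle m; omega⟩ with hf
    have hfval : ∀ m : Fin k, (f m : ℕ) =
        if (σ (Fin.castSucc m) : ℕ) < (pos : ℕ) then (σ (Fin.castSucc m) : ℕ)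
        else (σ (Fin.castSucc m) : ℕ) - 1 := by
      intro m
      by_cases hc : (σ (Fin.castSucc m) : ℕ) < (pos : ℕ)
      · rw [if_pos hc]; simp only [hf]; rw [dif_pos hc]
      · rw [if_neg hc]; simp only [hf]; rw [dif_neg hc]
    have h : ∀ a b, τ a ≤ τ b ↔ f a ≤ f b := by
      intro a b
      rw [hpat a b]
      have ha := havoid a; have hb := havoid b
      have ha' := hfval a; have hb' := hfval b
      simp only [Fin.le_iff_val_le_val] at *
      rw [ha', hb']
      split <;> split <;> omega
    have hfeq := pattern_eq τ f h
    have hτval : ∀ m : Fin k, (τ m : ℕ) =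
        if (σ (Fin.castSucc m) : ℕ) < (pos : ℕ) then (σ (Fin.castSucc m) : ℕ)
        else (σ (Fin.castSucc m) : ℕ) - 1 := by
      intro m; rw [← hfeq m]; exact hfval m
    refine ⟨pos, ?_, ?_, ?_⟩
    · have h1 := hτval pos
      have h2 : (σ (Fin.castSucc pos) : ℕ) = k := by rw [hback]; rfl
      rw [h2] at h1
      rw [h1]
      simp [Nat.not_lt.mpr hposlt.le]
    · intro m
      have h1 := hτval m
      have h2 := havoid m
      have h3 := hle m
      have h4 := (τ m).isLt
      split at h1 <;> split <;> omega
    · rw [hpos]; rfl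
end

section
/- The number of permutations τ ∈ S_k such that J(τ) = {0, 1, …, k} (i.e., all initial patterns of τ are involutions) equals 2^{k-1}, for k ≥ 1. -/
open Equiv Finset

open scoped Classical

/-! A permutation is layered (a concatenation of decreasing runs of consecutive values) exactly
when the two entries of each inversion lie on a common antidiagonal `i + σ i = const`. Deleting the
last entry and standardising preserves this; conversely, if the standardised prefix of an involution
is layered, the involution itself is layered, because its last block is forced. By induction on `k`,
all initial patterns of `τ` are involutions iff `τ` is layered. A layered permutation of `S_{n+1}`
has exactly two layered one-point extensions (append a fixed point, or prolong the last block), so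
there are `2 ^ (k - 1)` of them. -/

theorem Fin.val_succAbove {n : ℕ} (p : Fin (n + 1)) (i : Fin n) :
    (p.succAbove i : ℕ) = if (i : ℕ) < p then (i : ℕ) else (i : ℕ) + 1 := by
  unfold Fin.succAbove
  split_ifs <;> simp_all [Fin.lt_def]

namespace Equiv.Perm

variable {n : ℕ}

-- `σ.snoc v` appends the value `v` to `σ`, shifting the values `≥ v` up by one; `τ.init` deletes
-- the last entry of `τ` and standardises the rest.
def snoc (σ : Perm (Fin n)) (v : Fin (n + 1)) : Perm (Fin (n + 1)) :=
  finSuccEquivLast.trans (σ.optionCongr.trans (finSuccEquiv' v).symm)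

def init (τ : Perm (Fin (n + 1))) : Perm (Fin n) :=
  removeNone (finSuccEquivLast.symm.trans (τ.trans (finSuccEquiv' (τ (Fin.last n)))))

@[simp]
theorem snoc_last (σ : Perm (Fin n)) (v : Fin (n + 1)) : σ.snoc v (Fin.last n) = v := by
  simp [snoc, finSuccEquivLast_last, finSuccEquiv'_symm_none]

@[simp]
theorem snoc_castSucc (σ : Perm (Fin n)) (v : Fin (n + 1)) (i : Fin n) :
    σ.snoc v i.castSucc = v.succAbove (σ i) := by
  simp [snoc, finSuccEquivLast_castSucc, finSuccEquiv'_symm_some]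

theorem succAbove_init (τ : Perm (Fin (n + 1))) (i : Fin n) :
    (τ (Fin.last n)).succAbove (τ.init i) = τ i.castSucc := by
  set e := finSuccEquivLast.symm.trans (τ.trans (finSuccEquiv' (τ (Fin.last n))))
  have he : e (some i) ≠ none := by
    intro h
    have : e none = none := by simp [e, finSuccEquivLast_symm_none, finSuccEquiv'_at]
    exact Option.some_ne_none i (e.injective (h.trans this.symm))
  obtain ⟨y, hy⟩ := Option.ne_none_iff_exists'.mp he
  have hinit : some (τ.init i) = e (some i) := removeNone_some e ⟨y, hy⟩
  apply (finSuccEquiv' (τ (Fin.last n))).injective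
  rw [finSuccEquiv'_succAbove, hinit]
  simp [e, finSuccEquivLast_symm_some]

@[simp]
theorem snoc_init (τ : Perm (Fin (n + 1))) : τ.init.snoc (τ (Fin.last n)) = τ := by
  ext x : 1
  induction x using Fin.lastCases with
  | last => simp
  | cast i => simp [succAbove_init]

@[simp]
theorem init_snoc (σ : Perm (Fin n)) (v : Fin (n + 1)) : (σ.snoc v).init = σ := by
  ext i : 1
  apply (Fin.succAbove_right_injective (p := v))
  simpa using succAbove_init (σ.snoc v) i

theorem init_le_init_iff (τ : Perm (Fin (n + 1))) (a b : Fin n) :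
    τ.init a ≤ τ.init b ↔ τ a.castSucc ≤ τ b.castSucc := by
  rw [← succAbove_init, ← succAbove_init, Fin.succAbove_le_succAbove_iff]

theorem init_apply_eq_last {τ : Perm (Fin (n + 2))} (hτ : Function.Involutive τ) {w : Fin (n + 1)}
    (hw : τ (Fin.last (n + 1)) = w.castSucc) : τ.init w = Fin.last n := by
  apply Fin.succAbove_right_injective (p := τ (Fin.last (n + 1)))
  rw [succAbove_init, ← hw, hτ, hw, Fin.succAbove_castSucc_of_le _ _ (Fin.le_last w), Fin.succ_last]

theorem mul_self_eq_one_iff_involutive {α : Type*} (τ : Perm α) :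
    τ * τ = 1 ↔ Function.Involutive τ := by
  simp [Equiv.ext_iff, Function.Involutive]

def AntidiagonalInversions (σ : Perm (Fin n)) : Prop :=
  ∀ a b, a < b → σ b < σ a → (σ a : ℕ) + a = σ b + b

theorem antidiagonalInversions_of_reverses_tail {τ : Perm (Fin (n + 1))} (v : ℕ)
    (htail : ∀ x : Fin (n + 1), v ≤ x → (τ x : ℕ) + x = n + v)
    (hhead : ∀ x : Fin (n + 1), (x : ℕ) < v → (τ x : ℕ) < v)
    (hinit : ∀ a b : Fin (n + 1), a < b → (b : ℕ) < v → τ b < τ a → (τ a : ℕ) + a = τ b + b) :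
    τ.AntidiagonalInversions := by
  intro a b hab hba
  by_cases hb : (b : ℕ) < v
  · exact hinit a b hab hb hba
  have hτb := htail b (not_lt.1 hb)
  rw [Fin.lt_def] at hab hba
  by_cases ha : (a : ℕ) < v
  · have := hhead a ha
    have := b.is_le
    omega
  · have := htail a (not_lt.1 ha)
    omega

namespace AntidiagonalInversions

theorem involutive {σ : Perm (Fin n)} (h : σ.AntidiagonalInversions) : Function.Involutive σ := by
  intro i
  induction i using WellFoundedLT.induction with
  | _ i ih =>
    rcases lt_trichotomy (σ i) i with hlt | heq | hgt
    · exact σ.injective (ih _ hlt)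
    · rw [heq, heq]
    · obtain ⟨p, hp⟩ := σ.surjective i
      rcases lt_trichotomy p i with hpi | rfl | hip
      · have := ih p hpi
        rw [hp] at this
        exact absurd (this ▸ hgt) hpi.not_gt
      · exact absurd hp hgt.ne'
      · have hsum := h i p hip (hp ▸ hgt)
        have : σ i = p := Fin.ext (by rw [hp] at hsum; omega)
        rw [this, hp]

theorem init {τ : Perm (Fin (n + 1))} (h : τ.AntidiagonalInversions) :
    τ.init.AntidiagonalInversions := by
  intro a b hab hba
  have hval (i : Fin n) : (τ i.castSucc : ℕ) =
      if (τ.init i : ℕ) < τ (Fin.last n) then (τ.init i : ℕ) else (τ.init i : ℕ) + 1 := by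
    rw [← succAbove_init, Fin.val_succAbove]
  have hinv : τ b.castSucc < τ a.castSucc := by
    rw [← succAbove_init, ← succAbove_init]
    exact Fin.succAbove_lt_succAbove_iff.2 hba
  have hsum := h _ _ (Fin.castSucc_lt_castSucc_iff.2 hab) hinv
  have hstraddle : τ (Fin.last n) < τ a.castSucc → τ (Fin.last n) ≤ τ b.castSucc := by
    intro hlast
    have := h _ _ (Fin.castSucc_lt_last a) hlast
    simp only [Fin.val_castSucc, Fin.val_last] at this hsum
    rw [Fin.le_def]
    have := b.isLt
    omega
  simp only [Fin.val_castSucc, hval] at hsum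
  simp only [Fin.lt_def, Fin.le_def, hval] at hstraddle hba
  split_ifs at hsum hstraddle <;> omega

theorem add_eq_of_le {σ : Perm (Fin (n + 1))} (h : σ.AntidiagonalInversions) {u l : Fin (n + 1)}
    (hu : σ u = Fin.last n) (hl : u ≤ l) : (σ l : ℕ) + l = n + u := by
  rcases hl.eq_or_lt with rfl | hlt
  · rw [hu, Fin.val_last]
  · have hne : σ l ≠ Fin.last n := hu ▸ σ.injective.ne hlt.ne'
    have := h u l hlt (hu ▸ Fin.lt_last_iff_ne_last.2 hne)
    rw [hu, Fin.val_last] at this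
    omega

theorem lt_of_lt {σ : Perm (Fin (n + 1))} (h : σ.AntidiagonalInversions) {u l : Fin (n + 1)}
    (hu : σ u = Fin.last n) (hl : l < u) : (σ l : ℕ) < u := by
  by_contra hle
  have := h.add_eq_of_le hu (Fin.le_def.2 (not_lt.1 hle))
  rw [h.involutive l] at this
  have := (σ l).is_le
  rw [Fin.lt_def] at hl
  omega

theorem snoc_last {σ : Perm (Fin n)} (h : σ.AntidiagonalInversions) :
    (σ.snoc (Fin.last n)).AntidiagonalInversions := by
  refine antidiagonalInversions_of_reverses_tail n (fun x hx => ?_) (fun x hx => ?_) ?_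
  · obtain rfl : x = Fin.last n := Fin.ext (by have := x.is_le; simp; omega)
    simp
  · obtain ⟨i, rfl⟩ | rfl := Fin.eq_castSucc_or_eq_last x
    · simp
    · simp at hx
  · intro a b hab hb hba
    obtain ⟨a, rfl⟩ | rfl := Fin.eq_castSucc_or_eq_last a
    · obtain ⟨b, rfl⟩ | rfl := Fin.eq_castSucc_or_eq_last b
      · simp only [snoc_castSucc, Fin.succAbove_last, Fin.castSucc_lt_castSucc_iff,
          Fin.val_castSucc] at hab hba ⊢
        exact h a b hab hba
      · simp at hb
    · exact absurd hab (not_lt.2 (Fin.le_last b))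

theorem snoc_castSucc {σ : Perm (Fin (n + 1))} (h : σ.AntidiagonalInversions) {u : Fin (n + 1)}
    (hu : σ u = Fin.last n) : (σ.snoc u.castSucc).AntidiagonalInversions := by
  have hval (i : Fin (n + 1)) : (σ.snoc u.castSucc i.castSucc : ℕ) =
      if (σ i : ℕ) < u then (σ i : ℕ) else (σ i : ℕ) + 1 := by
    rw [Perm.snoc_castSucc, Fin.val_succAbove, Fin.val_castSucc]
  refine antidiagonalInversions_of_reverses_tail u (fun x hx => ?_) (fun x hx => ?_) ?_
  · obtain ⟨l, rfl⟩ | rfl := Fin.eq_castSucc_or_eq_last x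
    · have := h.add_eq_of_le hu (Fin.le_def.2 hx)
      have := l.is_le
      rw [hval]
      simp only [Fin.val_castSucc]
      split_ifs <;> omega
    · simp
      omega
  · obtain ⟨l, rfl⟩ | rfl := Fin.eq_castSucc_or_eq_last x
    · have := h.lt_of_lt hu (Fin.lt_def.2 hx)
      rw [hval, if_pos this]
      exact this
    · have := u.is_le
      simp at hx
      omega
  · intro a b hab hb hba
    obtain ⟨a, rfl⟩ | rfl := Fin.eq_castSucc_or_eq_last a
    · obtain ⟨b, rfl⟩ | rfl := Fin.eq_castSucc_or_eq_last b
      · rw [Fin.castSucc_lt_castSucc_iff] at hab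
        simp only [Fin.val_castSucc] at hb ⊢
        have hσb := h.lt_of_lt hu (Fin.lt_def.2 hb)
        have hσa := h.lt_of_lt hu (Fin.lt_def.2 (hab.trans_le' le_rfl |>.trans hb))
        rw [Fin.lt_def, hval, hval, if_pos hσa, if_pos hσb] at hba
        rw [hval, hval, if_pos hσa, if_pos hσb]
        exact h a b hab (Fin.lt_def.2 hba)
      · have := u.is_le
        simp at hb
        omega
    · exact absurd hab (not_lt.2 (Fin.le_last b))

theorem of_init {τ : Perm (Fin (n + 1))} (hτ : Function.Involutive τ)
    (h : τ.init.AntidiagonalInversions) : τ.AntidiagonalInversions := by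
  rw [← snoc_init τ]
  obtain ⟨w, hw⟩ | hw := Fin.eq_castSucc_or_eq_last (τ (Fin.last n))
  · cases n with
    | zero => exact w.elim0
    | succ n =>
      rw [hw]
      exact h.snoc_castSucc (init_apply_eq_last hτ hw)
  · rw [hw]
    exact h.snoc_last

end AntidiagonalInversions

theorem antidiagonalInversions_iff_init {τ : Perm (Fin (n + 1))} :
    τ.AntidiagonalInversions ↔ τ.init.AntidiagonalInversions ∧ Function.Involutive τ :=
  ⟨fun h => ⟨h.init, h.involutive⟩, fun h => h.1.of_init h.2⟩

end Equiv.Perm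

open Equiv.Perm

theorem isPattern_congr {j : ℕ} {α β : Type*} [LinearOrder α] [LinearOrder β] {w : Fin j → α}
    {w' : Fin j → β} (h : ∀ a b, w a ≤ w b ↔ w' a ≤ w' b) (p : Perm (Fin j)) :
    IsPattern w p ↔ IsPattern w' p := by
  simp only [IsPattern, h]

theorem isPattern_perm_iff {k : ℕ} {τ p : Perm (Fin k)} : IsPattern τ p ↔ p = τ := by
  refine ⟨fun h => Equiv.ext fun a => ?_, fun h a b => h ▸ Iff.rfl⟩
  let e : Fin k ≃o Fin k := ⟨τ.symm.trans p, fun {x y} => by simp [h _ _]⟩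
  simpa [e] using DFunLike.congr_fun (Subsingleton.elim e (OrderIso.refl _)) (τ a)

theorem initPatternIsInvolution_self_iff {k : ℕ} (τ : Perm (Fin k)) :
    InitPatternIsInvolution τ k ↔ Function.Involutive τ := by
  rw [← mul_self_eq_one_iff_involutive]
  refine ⟨fun ⟨_, p, hp, hpp⟩ => ?_, fun h => ⟨le_rfl, τ, fun _ _ => Iff.rfl, h⟩⟩
  rwa [← isPattern_perm_iff.1 ((isPattern_congr (fun _ _ => Iff.rfl) p).1 hp)]

theorem initPatternIsInvolution_init_iff {n j : ℕ} (τ : Perm (Fin (n + 1))) (hj : j ≤ n) :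
    InitPatternIsInvolution τ.init j ↔ InitPatternIsInvolution τ j := by
  have key (h₁ : j ≤ n) (h₂ : j ≤ n + 1) (a b : Fin j) :
      τ.init (Fin.castLE h₁ a) ≤ τ.init (Fin.castLE h₁ b) ↔
        τ (Fin.castLE h₂ a) ≤ τ (Fin.castLE h₂ b) :=
    init_le_init_iff τ _ _
  exact ⟨fun ⟨_, p, hp, hpp⟩ => ⟨by omega, p, (isPattern_congr (key _ _) p).1 hp, hpp⟩,
    fun ⟨_, p, hp, hpp⟩ => ⟨hj, p, (isPattern_congr (key _ _) p).2 hp, hpp⟩⟩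

theorem forall_initPatternIsInvolution_iff {k : ℕ} (τ : Perm (Fin k)) :
    (∀ j, 1 ≤ j → j ≤ k → InitPatternIsInvolution τ j) ↔ τ.AntidiagonalInversions := by
  induction k with
  | zero => exact iff_of_true (fun j h₁ h₂ => by omega) (fun a => a.elim0)
  | succ n ih =>
    calc (∀ j, 1 ≤ j → j ≤ n + 1 → InitPatternIsInvolution τ j)
        ↔ (∀ j, 1 ≤ j → j ≤ n → InitPatternIsInvolution τ.init j) ∧
            InitPatternIsInvolution τ (n + 1) := by
          refine ⟨fun H => ⟨fun j h₁ h₂ => ?_, H _ (by omega) le_rfl⟩, fun ⟨H, hτ⟩ j h₁ h₂ => ?_⟩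
          · exact (initPatternIsInvolution_init_iff τ h₂).2 (H j h₁ (by omega))
          · rcases h₂.lt_or_eq with h₂ | rfl
            · exact (initPatternIsInvolution_init_iff τ (by omega)).1 (H j h₁ (by omega))
            · exact hτ
      _ ↔ τ.AntidiagonalInversions := by
          rw [ih, initPatternIsInvolution_self_iff, antidiagonalInversions_iff_init]

theorem jSet_eq_iff {k : ℕ} (τ : Perm (Fin k)) :
    JSet τ = {j | j ≤ k} ↔ ∀ j, 1 ≤ j → j ≤ k → InitPatternIsInvolution τ j := by
  simp only [Set.ext_iff, JSet, Set.mem_union, Set.mem_singleton_iff, Set.mem_ofPred_eq]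
  refine ⟨fun H j h₁ h₂ => ?_, fun H j => ⟨?_, fun hj => ?_⟩⟩
  · obtain h₀ | ⟨-, hτj⟩ := (H j).2 h₂
    · omega
    · exact hτj
  · rintro (rfl | ⟨-, hj, -⟩)
    · exact Nat.zero_le k
    · exact hj
  · rcases Nat.eq_zero_or_pos j with h₀ | h₀
    · exact Or.inl h₀
    · exact Or.inr ⟨h₀, H j h₀ hj⟩

theorem card_antidiagonalInversions_succ_succ (n : ℕ) :
    #{τ : Perm (Fin (n + 2)) | τ.AntidiagonalInversions} =
      2 * #{σ : Perm (Fin (n + 1)) | σ.AntidiagonalInversions} := by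
  set S := ({σ | σ.AntidiagonalInversions} : Finset (Perm (Fin (n + 1))))
  suffices h : #(S ×ˢ (univ : Finset Bool)) =
      #{τ : Perm (Fin (n + 2)) | τ.AntidiagonalInversions} by
    rw [← h, card_product, card_univ, Fintype.card_bool, mul_comm]
  -- The last block of `σ` starts at `σ⁻¹ (last n)`; appending that value prolongs the block.
  refine Finset.card_nbij'
    (fun p => p.1.snoc (if p.2 then Fin.last (n + 1) else (p.1.symm (Fin.last n)).castSucc))
    (fun τ => (τ.init, decide (τ (Fin.last (n + 1)) = Fin.last (n + 1)))) ?_ ?_ ?_ ?_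
  · rintro ⟨σ, b⟩ hσ
    simp only [S, coe_product, coe_filter, coe_univ, Set.mem_prod, Set.mem_univ, mem_univ, true_and,
      and_true, Set.mem_ofPred_eq] at hσ ⊢
    cases b
    · exact hσ.snoc_castSucc (σ.apply_symm_apply _)
    · exact hσ.snoc_last
  · intro τ hτ
    simp only [S, coe_product, coe_filter, coe_univ, Set.mem_prod, Set.mem_univ, mem_univ, true_and,
      and_true, Set.mem_ofPred_eq] at hτ ⊢
    exact hτ.init
  · rintro ⟨σ, b⟩ -
    cases b <;> simp [Fin.castSucc_ne_last]
  · intro τ hτ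
    simp only [coe_filter, mem_univ, true_and, Set.mem_ofPred_eq] at hτ
    obtain ⟨w, hw⟩ | hw := Fin.eq_castSucc_or_eq_last (τ (Fin.last (n + 1)))
    · have hinit := init_apply_eq_last hτ.involutive hw
      simp only [hw, Fin.castSucc_ne_last, decide_false, Bool.false_eq_true, if_false]
      rw [← hinit, symm_apply_apply, ← hw, snoc_init]
    · simp only [hw, decide_true, if_true]
      exact (congrArg τ.init.snoc hw.symm).trans (snoc_init τ)

theorem card_antidiagonalInversions : ∀ k : ℕ,
    #{τ : Perm (Fin k) | τ.AntidiagonalInversions} = 2 ^ (k - 1)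
  | 0 | 1 => by
    rw [Finset.filter_true_of_mem fun τ _ a b hab => by
      have := b.isLt; rw [Fin.lt_def] at hab; omega]
    simp
  | n + 2 => by
    rw [card_antidiagonalInversions_succ_succ, card_antidiagonalInversions (n + 1)]
    simp [pow_succ']

theorem count_full_jset_general {k : ℕ} :
    (Finset.univ.filter fun τ : Equiv.Perm (Fin k) => JSet τ = {j | j ≤ k}).card
      = 2 ^ (k - 1) := by
  rw [Finset.filter_congr fun τ _ =>
    (jSet_eq_iff τ).trans (forall_initPatternIsInvolution_iff τ)]
  exact card_antidiagonalInversions k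

theorem count_full_jset {k : ℕ} (hk : 1 ≤ k) :
    (Finset.univ.filter fun τ : Equiv.Perm (Fin k) => JSet τ = {j | j ≤ k}).card
      = 2 ^ (k - 1) :=
  count_full_jset_general
end
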